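/- Let d, R be positive integers, I : Fin d → ℕ, weights s : Fin R → ℝ, factor matrices A : (k : Fin d) → Fin (I k) → Fin R → ℝ, and a data tensor x : (Π_k Fin (I k)) → ℝ. Fix a mode k₀, row p ∈ Fin (I k₀), and column j₀ ∈ Fin R. Then the map ℝ → ℝ sending a to (1/2) · Σ_{i ∈ Π_k Fin (I k)} (x_i − m_i(a))², where m(a) is the Kruskal model with the (p, j₀) entry of A^{(k₀)} replaced by a, is differentiable at a = A^{(k₀)}(p, j₀) with derivative Σ_{j' ∈ Fin R} s_{j'} · A^{(k₀)}(p, j') · s_{j₀} · Π_{l ≠ k₀} (Σ_r A^{(l)}(r, j')·A^{(l)}(r, j₀)) − Σ_{i : i_{k₀} = p} x_i · s_{j₀} · Π_{l ≠ k₀} A^{(l)}(i_l, j₀). -/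

import Mathlib

/-!
The model entry `m_i` is affine in the single factor entry `a = A^{(k₀)}(p, j₀)`, with slope
`g_i = [i_{k₀} = p] · s_{j₀} · ∏_{l ≠ k₀} A^{(l)}(i_l, j₀)`, so the loss is a quadratic in `a`
whose derivative at the current value is `∑_i (m_i - x_i) g_i`. The data part of this sum is the
stated sum over the fibre `i_{k₀} = p`; in the model part, summing a product over the modes
`l ≠ k₀` across that fibre factors it into the product of the column inner products
`∑_r A^{(l)}(r, j') A^{(l)}(r, j₀)`, i.e. entries of the Gram matrices.
-/

open Finset

section ProdErase

variable {ι : Type*} [Fintype ι] [DecidableEq ι]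

theorem prod_apply_update_eq_mul_prod_erase {M : Type*} [CommMonoid M] {β : ι → Type*}
    (g : (l : ι) → β l → M) (f : (l : ι) → β l) (k₀ : ι) (b : β k₀) :
    ∏ l, g l (Function.update f k₀ b l) = g k₀ b * ∏ l ∈ univ.erase k₀, g l (f l) := by
  simp_rw [Function.apply_update g, prod_update_of_mem (mem_univ k₀), sdiff_singleton_eq_erase]

theorem sum_filter_prod_erase_eq_prod_erase_sum {R : Type*} [CommSemiring R] {κ : ι → Type*}
    [∀ k, Fintype (κ k)] [∀ k, DecidableEq (κ k)] (k₀ : ι) (p : κ k₀) (f : (l : ι) → κ l → R) :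
    ∑ i ∈ univ.filter (fun i : (k : ι) → κ k => i k₀ = p), ∏ l ∈ univ.erase k₀, f l (i l)
      = ∏ l ∈ univ.erase k₀, ∑ r, f l r := by
  -- Put the indicator of `p` in mode `k₀` and expand the full product of sums over all modes.
  have hterm (i : (k : ι) → κ k) :
      ∏ l, Function.update f k₀ (Pi.single p 1) l (i l)
        = if i k₀ = p then ∏ l ∈ univ.erase k₀, f l (i l) else 0 := by
    rw [prod_apply_update_eq_mul_prod_erase (fun l (g : κ l → R) => g (i l)), Pi.single_apply,
      ite_mul, one_mul, zero_mul]
  have hfactors : ∏ l, ∑ r, Function.update f k₀ (Pi.single p 1) l r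
      = ∏ l ∈ univ.erase k₀, ∑ r, f l r := by
    rw [prod_apply_update_eq_mul_prod_erase (fun l (g : κ l → R) => ∑ r, g r), sum_pi_single',
      if_pos (mem_univ p), one_mul]
  rw [← hfactors, Fintype.prod_sum, sum_filter]
  exact sum_congr rfl fun i _ => (hterm i).symm

end ProdErase

section Kruskal

variable {ι ρ R : Type*} {κ : ι → Type*} [Fintype ι]

def kruskal [CommSemiring R] [Fintype ρ] (s : ρ → R) (A : (k : ι) → κ k → ρ → R)
    (i : (k : ι) → κ k) : R :=
  ∑ j, s j * ∏ k, A k (i k) j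

variable [DecidableEq ι]

def updateFactorEntry [∀ k, DecidableEq (κ k)] [DecidableEq ρ] (A : (k : ι) → κ k → ρ → R)
    (k₀ : ι) (p : κ k₀) (j₀ : ρ) (a : R) : (k : ι) → κ k → ρ → R :=
  Function.update A k₀ (Function.update (A k₀) p (Function.update (A k₀ p) j₀ a))

/-- `∂ (kruskal s A i) / ∂ (A k₀ p j₀)`. -/
def kruskalFactorPartial [CommSemiring R] [∀ k, DecidableEq (κ k)] (s : ρ → R)
    (A : (k : ι) → κ k → ρ → R) (k₀ : ι) (p : κ k₀) (j₀ : ρ) (i : (k : ι) → κ k) : R :=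
  if i k₀ = p then s j₀ * ∏ l ∈ univ.erase k₀, A l (i l) j₀ else 0

theorem kruskal_update_factor [CommSemiring R] [Fintype ρ] (s : ρ → R)
    (A : (k : ι) → κ k → ρ → R) (k₀ : ι) (M : κ k₀ → ρ → R) (i : (k : ι) → κ k) :
    kruskal s (Function.update A k₀ M) i
      = ∑ j, s j * (M (i k₀) j * ∏ l ∈ univ.erase k₀, A l (i l) j) := by
  refine sum_congr rfl fun j _ => ?_
  rw [prod_apply_update_eq_mul_prod_erase (fun l (B : κ l → ρ → R) => B (i l) j)]

theorem kruskal_eq_sum_mul_prod_erase [CommSemiring R] [Fintype ρ] (s : ρ → R)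
    (A : (k : ι) → κ k → ρ → R) (k₀ : ι) (i : (k : ι) → κ k) :
    kruskal s A i = ∑ j, s j * (A k₀ (i k₀) j * ∏ l ∈ univ.erase k₀, A l (i l) j) := by
  rw [← kruskal_update_factor, Function.update_eq_self]

theorem kruskal_updateFactorEntry [CommRing R] [Fintype ρ] [DecidableEq ρ]
    [∀ k, DecidableEq (κ k)] (s : ρ → R) (A : (k : ι) → κ k → ρ → R) (k₀ : ι) (p : κ k₀)
    (j₀ : ρ) (a : R) (i : (k : ι) → κ k) :
    kruskal s (updateFactorEntry A k₀ p j₀ a) i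
      = kruskal s A i + kruskalFactorPartial s A k₀ p j₀ i * (a - A k₀ p j₀) := by
  rw [updateFactorEntry, kruskal_update_factor, kruskal_eq_sum_mul_prod_erase s A k₀,
    kruskalFactorPartial]
  by_cases hi : i k₀ = p
  · rw [hi, if_pos rfl, Function.update_self, ← add_sum_erase _ _ (mem_univ j₀),
      ← add_sum_erase _ _ (mem_univ j₀), Function.update_self,
      sum_congr rfl fun j hj => by rw [Function.update_of_ne (ne_of_mem_erase hj)]]
    ring
  · rw [Function.update_of_ne hi, if_neg hi, zero_mul, add_zero]

theorem sum_kruskal_mul_kruskalFactorPartial [CommSemiring R] [Fintype ρ] [∀ k, Fintype (κ k)]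
    [∀ k, DecidableEq (κ k)] (s : ρ → R) (A : (k : ι) → κ k → ρ → R) (k₀ : ι) (p : κ k₀)
    (j₀ : ρ) :
    ∑ i, kruskal s A i * kruskalFactorPartial s A k₀ p j₀ i
      = ∑ j, s j * A k₀ p j * s j₀ * ∏ l ∈ univ.erase k₀, ∑ r, A l r j * A l r j₀ := by
  have hterm (i : (k : ι) → κ k) (hi : i k₀ = p) :
      kruskal s A i * (s j₀ * ∏ l ∈ univ.erase k₀, A l (i l) j₀)
        = ∑ j, s j * A k₀ p j * s j₀ * ∏ l ∈ univ.erase k₀, (A l (i l) j * A l (i l) j₀) := by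
    rw [kruskal_eq_sum_mul_prod_erase s A k₀, hi, sum_mul]
    refine sum_congr rfl fun j _ => ?_
    rw [prod_mul_distrib]
    ring
  simp_rw [kruskalFactorPartial, mul_ite, mul_zero, ← sum_filter]
  rw [sum_congr rfl fun i hi => hterm i (mem_filter.mp hi).2, sum_comm]
  refine sum_congr rfl fun j _ => ?_
  rw [← mul_sum, sum_filter_prod_erase_eq_prod_erase_sum k₀ p fun l r => A l r j * A l r j₀]

theorem sum_mul_kruskalFactorPartial [CommSemiring R] [∀ k, Fintype (κ k)]
    [∀ k, DecidableEq (κ k)] (s : ρ → R) (A : (k : ι) → κ k → ρ → R) (k₀ : ι) (p : κ k₀)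
    (j₀ : ρ) (x : ((k : ι) → κ k) → R) :
    ∑ i, x i * kruskalFactorPartial s A k₀ p j₀ i
      = ∑ i ∈ univ.filter (fun i : (k : ι) → κ k => i k₀ = p),
          x i * s j₀ * ∏ l ∈ univ.erase k₀, A l (i l) j₀ := by
  simp_rw [kruskalFactorPartial, mul_ite, mul_zero, ← sum_filter, mul_assoc]

end Kruskal

theorem hasDerivAt_half_sum_sq_sub_affine {ι : Type*} (t : Finset ι) (x m g : ι → ℝ) (a₀ : ℝ) :
    HasDerivAt (fun a => 1 / 2 * ∑ i ∈ t, (x i - (m i + g i * (a - a₀))) ^ 2)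
      (∑ i ∈ t, (m i - x i) * g i) a₀ := by
  have hresidual (i : ι) : HasDerivAt (fun a => x i - (m i + g i * (a - a₀))) (-g i) a₀ := by
    simpa using
      ((((hasDerivAt_id a₀).sub_const a₀).const_mul (g i)).const_add (m i)).const_sub (x i)
  have hloss := (HasDerivAt.fun_sum fun i (_ : i ∈ t) => (hresidual i).fun_pow 2).const_mul (1 / 2)
  refine hloss.congr_deriv ?_
  rw [mul_sum]
  refine sum_congr rfl fun i _ => ?_
  simp only [sub_self, mul_zero, add_zero]
  ring

theorem gaussian_loss_hasDerivAt_factor_entry_general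
    (d R : ℕ) (I : Fin d → ℕ)
    (s : Fin R → ℝ)
    (A : (k : Fin d) → Fin (I k) → Fin R → ℝ)
    (x : ((k : Fin d) → Fin (I k)) → ℝ)
    (k₀ : Fin d) (p : Fin (I k₀)) (j₀ : Fin R) :
    HasDerivAt
      (fun a : ℝ => (1 / 2 : ℝ) * ∑ i : (k : Fin d) → Fin (I k),
        (x i - ∑ j : Fin R, s j *
          ∏ k : Fin d,
            Function.update A k₀
              (Function.update (A k₀) p (Function.update (A k₀ p) j₀ a)) k (i k) j) ^ 2)
      ((∑ j' : Fin R, s j' * A k₀ p j' * s j₀ *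
          ∏ l ∈ Finset.univ.erase k₀, ∑ r : Fin (I l), A l r j' * A l r j₀)
        - ∑ i ∈ Finset.univ.filter (fun i : (k : Fin d) → Fin (I k) => i k₀ = p),
            x i * s j₀ * ∏ l ∈ Finset.univ.erase k₀, A l (i l) j₀)
      (A k₀ p j₀) := by
  have hloss := hasDerivAt_half_sum_sq_sub_affine univ x (kruskal s A)
    (kruskalFactorPartial s A k₀ p j₀) (A k₀ p j₀)
  simp only [sub_mul, sum_sub_distrib, sum_kruskal_mul_kruskalFactorPartial,
    sum_mul_kruskalFactorPartial, ← kruskal_updateFactorEntry] at hloss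
  exact hloss

/-- Entrywise gradient of the Gaussian loss `(1/2)‖X − M(a)‖_F²` with respect to
the factor matrix entry `A k₀ p j₀`: it splits into a Gram-matrix term plus a
term involving the data tensor. -/
theorem gaussian_loss_hasDerivAt_factor_entry
    (d R : ℕ) (hd : 0 < d) (hR : 0 < R) (I : Fin d → ℕ)
    (s : Fin R → ℝ)
    (A : (k : Fin d) → Fin (I k) → Fin R → ℝ)
    (x : ((k : Fin d) → Fin (I k)) → ℝ)
    (k₀ : Fin d) (p : Fin (I k₀)) (j₀ : Fin R) :
    HasDerivAt
      (fun a : ℝ => (1 / 2 : ℝ) * ∑ i : (k : Fin d) → Fin (I k),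
        (x i - ∑ j : Fin R, s j *
          ∏ k : Fin d,
            Function.update A k₀
              (Function.update (A k₀) p (Function.update (A k₀ p) j₀ a)) k (i k) j) ^ 2)
      ((∑ j' : Fin R, s j' * A k₀ p j' * s j₀ *
          ∏ l ∈ Finset.univ.erase k₀, ∑ r : Fin (I l), A l r j' * A l r j₀)
        - ∑ i ∈ Finset.univ.filter (fun i : (k : Fin d) → Fin (I k) => i k₀ = p),
            x i * s j₀ * ∏ l ∈ Finset.univ.erase k₀, A l (i l) j₀)
      (A k₀ p j₀) :=
  gaussian_loss_hasDerivAt_factor_entry_general d R I s A x k₀ p j₀
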